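/- For every valid substitution Γ ⊢ σ : Δ in CaTT and every X ∈ U(Γ): (i) the preimage σ⁻¹X ⊆ Var(Δ) is up-closed; (ii) depth_{σ⁻¹X}(t) ≤ depth_X(t[σ]) for every term Δ ⊢ t : A; (iii) depth_{σ⁻¹X}(τ) ≤ depth_X(τ ∘ σ) for every substitution Δ ⊢ τ : Θ; (iv) depth_{σ⁻¹X}(Δ) ≤ depth_X(σ). -/

import Mathlib

namespace Catt

mutual
inductive Ty : Type where
  | obj : Ty
  | arr : Ty → Tm → Tm → Ty
inductive Tm : Type where
  | var : ℕ → Tm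
  | coh : List (ℕ × Ty) → Ty → List (ℕ × Tm) → Tm
end

abbrev Ctx := List (ℕ × Ty)
abbrev Sub := List (ℕ × Tm)

def lookupSub (γ : Sub) (x : ℕ) : Tm :=
  match γ with
  | [] => .var x
  | (y, t) :: γ' => if x = y then t else lookupSub γ' x

mutual
def Ty.subst : Ty → Sub → Ty
  | .obj, _ => .obj
  | .arr A u v, γ => .arr (A.subst γ) (u.subst γ) (v.subst γ)
def Tm.subst : Tm → Sub → Tm
  | .var x, γ => lookupSub γ x
  | .coh Δ A δ, γ => .coh Δ A (Sub.comp δ γ)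
def Sub.comp : Sub → Sub → Sub
  | [], _ => []
  | (x, t) :: δ, γ => (x, Tm.subst t γ) :: Sub.comp δ γ
end

mutual
def Tm.vars : Tm → Finset ℕ
  | .var x => {x}
  | .coh _ _ γ => Sub.vars γ
def Sub.vars : Sub → Finset ℕ
  | [] => ∅
  | (_, t) :: γ => Tm.vars t ∪ Sub.vars γ
end

def Ty.vars : Ty → Finset ℕ
  | .obj => ∅
  | .arr A u v => A.vars ∪ u.vars ∪ v.vars

def ctxVars : Ctx → Finset ℕ
  | [] => ∅
  | (x, _) :: Γ => insert x (ctxVars Γ)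

/-- Dimension of a type (`dim ⋆ = -1`). -/
def Ty.dim : Ty → ℤ
  | .obj => -1
  | .arr A _ _ => A.dim + 1

/-- Dimension of a context. -/
def ctxDim : Ctx → ℤ
  | [] => -1
  | (_, A) :: Γ => max (A.dim + 1) (ctxDim Γ)

/-- Type of a variable in a context (most recent binding). -/
def lookupTy : Ctx → ℕ → Ty
  | [], _ => .obj
  | (y, A) :: Γ, x => if x = y then A else lookupTy Γ x

/-- Dimension of a variable of a context. -/
def varDim (Γ : Ctx) (x : ℕ) : ℤ := (lookupTy Γ x).dim + 1

/-- Max of a finite set of integers, with `max ∅ = -1`. -/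
def fmax (s : Finset ℤ) : ℤ := WithBot.unbotD (-1) s.max

/-- Depth of a term `Γ ⊢ t : A` with respect to a set `X` of variables. -/
def depthTm (Γ : Ctx) (X : Finset ℕ) (t : Tm) (A : Ty) : ℤ :=
  fmax (((Tm.vars t ∪ Ty.vars A) ∩ X).image (fun x => (A.dim + 1) - varDim Γ x))

/-- Depth of a type with respect to a set `X` of variables. -/
def depthTy (Γ : Ctx) (X : Finset ℕ) (A : Ty) : ℤ :=
  fmax ((Ty.vars A ∩ X).image (fun x => A.dim - varDim Γ x))

/-- Depth of a substitution `Γ ⊢ σ : Δ` with respect to `X ⊆ Var Γ`. -/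
def depthSub (Γ : Ctx) (X : Finset ℕ) (σ : Sub) (Δ : Ctx) : ℤ :=
  fmax ((ctxVars Δ).image
    (fun x => depthTm Γ X (Tm.subst (.var x) σ) (Ty.subst (lookupTy Δ x) σ)))

/-- Identity substitution of a context. -/
def idSub : Ctx → Sub
  | [] => []
  | (x, _) :: Γ => (x, .var x) :: idSub Γ

/-- Depth of a context with respect to `X`. -/
def depthCtx (Γ : Ctx) (X : Finset ℕ) : ℤ := depthSub Γ X (idSub Γ) Γ

/-- `X` is an up-closed set of variables of `Γ`. -/
def upClosed (Γ : Ctx) (X : Finset ℕ) : Prop :=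
  (∀ x ∈ X, x ∈ ctxVars Γ) ∧
    ∀ y A, (y, A) ∈ Γ → ∀ x ∈ X, x ∈ Ty.vars A → y ∈ X

/-- Preimage `γ⁻¹ X` of a set of variables under a substitution into `Δ`. -/
def preimage (γ : Sub) (Δ : Ctx) (X : Finset ℕ) : Finset ℕ :=
  (ctxVars Δ).filter (fun x => ((Tm.vars (Tm.subst (.var x) γ)) ∩ X).Nonempty)

/-- The pasting-context judgement `Γ ⊢ps t : A`. -/
inductive Ps : Ctx → Tm → Ty → Prop where
  | base (x : ℕ) : Ps [(x, .obj)] (.var x) .obj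
  | ext {Γ : Ctx} {x : ℕ} {A : Ty} (y f : ℕ) :
      Ps Γ (.var x) A → y ∉ ctxVars Γ → f ∉ ctxVars Γ → y ≠ f →
      Ps ((f, .arr A (.var x) (.var y)) :: (y, A) :: Γ) (.var f)
        (.arr A (.var x) (.var y))
  | down {Γ : Ctx} {f : ℕ} {A : Ty} {u v : Tm} :
      Ps Γ (.var f) (.arr A u v) → Ps Γ v A

/-- `Γ` is a pasting context. -/
def PsCtx (Γ : Ctx) : Prop := ∃ x, Ps Γ (.var x) .obj

/-- The `i`-dimensional boundary of a pasting context
(`ε = false` for the source, `ε = true` for the target). -/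
def bdry (ε : Bool) (i : ℤ) : Ctx → Ctx
  | [] => []
  | [p] => [p]
  | (f, Af) :: (y, Ay) :: Γ =>
    if ε then
      (if Ay.dim > i - 1 then bdry ε i Γ
       else if Ay.dim = i - 1 then (y, Ay) :: (bdry ε i Γ).drop 1
       else (f, Af) :: (y, Ay) :: bdry ε i Γ)
    else
      (if Ay.dim ≥ i - 1 then bdry ε i Γ
       else (f, Af) :: (y, Ay) :: bdry ε i Γ)

/-- Codimension-1 source boundary `∂⁻Γ`. -/
def srcCtx (Γ : Ctx) : Ctx := bdry false (ctxDim Γ - 1) Γ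

/-- Codimension-1 target boundary `∂⁺Γ`. -/
def tgtCtx (Γ : Ctx) : Ctx := bdry true (ctxDim Γ - 1) Γ

/-- Fullness of a type over a pasting context: side conditions (comp) or (inv). -/
def isFull (Γ : Ctx) (A : Ty) : Prop :=
  ∃ B u v, A = .arr B u v ∧
    ((ctxVars (srcCtx Γ) = Tm.vars u ∪ Ty.vars B ∧
      ctxVars (tgtCtx Γ) = Tm.vars v ∪ Ty.vars B) ∨
     (ctxVars Γ = Tm.vars u ∪ Ty.vars B ∧
      ctxVars Γ = Tm.vars v ∪ Ty.vars B))

mutual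
/-- Well-formedness of contexts. -/
inductive CtxWf : Ctx → Prop where
  | nil : CtxWf []
  | cons {Γ : Ctx} {A : Ty} {x : ℕ} :
      CtxWf Γ → TyWf Γ A → x ∉ ctxVars Γ → CtxWf ((x, A) :: Γ)
/-- Well-formedness of types. -/
inductive TyWf : Ctx → Ty → Prop where
  | obj {Γ : Ctx} : CtxWf Γ → TyWf Γ .obj
  | arr {Γ : Ctx} {A : Ty} {u v : Tm} :
      TmWf Γ u A → TmWf Γ v A → TyWf Γ (.arr A u v)
/-- Typing of terms. -/
inductive TmWf : Ctx → Tm → Ty → Prop where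
  | var {Γ : Ctx} {x : ℕ} {A : Ty} : CtxWf Γ → (x, A) ∈ Γ → TmWf Γ (.var x) A
  | coh {Γ Δ : Ctx} {A : Ty} {γ : Sub} :
      PsCtx Δ → TyWf Δ A → isFull Δ A → SubWf Γ γ Δ →
      TmWf Γ (.coh Δ A γ) (Ty.subst A γ)
/-- Typing of substitutions. -/
inductive SubWf : Ctx → Sub → Ctx → Prop where
  | nil {Γ : Ctx} : CtxWf Γ → SubWf Γ [] []
  | cons {Γ : Ctx} {γ : Sub} {Δ : Ctx} {x : ℕ} {A : Ty} {t : Tm} :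
      SubWf Γ γ Δ → TyWf Δ A → x ∉ ctxVars Δ →
      TmWf Γ t (Ty.subst A γ) → SubWf Γ ((x, t) :: γ) ((x, A) :: Δ)
end

/-- North pole variable for suspension. -/
def vN : ℕ := 2000000000
/-- South pole variable for suspension. -/
def vS : ℕ := 2000000001

mutual
/-- Suspension of a type. -/
def Ty.susp : Ty → Ty
  | .obj => .arr .obj (.var vN) (.var vS)
  | .arr A u v => .arr (A.susp) (u.susp) (v.susp)
/-- Suspension of a term. -/
def Tm.susp : Tm → Tm
  | .var x => .var x
  | .coh Δ A γ => .coh (suspCtx Δ) (A.susp) (suspSub γ)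
/-- Suspension of a context. -/
def suspCtx : List (ℕ × Ty) → List (ℕ × Ty)
  | [] => [(vS, .obj), (vN, .obj)]
  | (x, A) :: Γ => (x, A.susp) :: suspCtx Γ
/-- Suspension of a substitution. -/
def suspSub : List (ℕ × Tm) → List (ℕ × Tm)
  | [] => [(vS, .var vS), (vN, .var vN)]
  | (x, t) :: γ => (x, t.susp) :: suspSub γ
end




/-- The data of the naturality construction of Benjamin–Markakis–Offord–Sarti–Vicary,
packaged with its defining recursive clauses (Section 3.2 of the paper).
`vminus x`, `vplus x`, `vtilde x` are the fresh variables `x⁻`, `x⁺`, `x̃`;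
`star n a b` is the binary composite `a ∗ₙ b` of two `(n+1)`-cells along their
`n`-dimensional boundary; `ctxUpPM Γ X = Γ ↑± X`; `ctxUp Γ X = Γ ↑ X`;
`injm`/`injp` are the substitutions `inj∓`; `tyUpFresh Γ A x X = A ↑ˣ X`;
`tyUpTm Γ A t X = A ↑ᵗ X`; `tmUp Γ t X = t ↑ X`; `subUp Γ γ X = γ ↑ X`;
`cohUp Γ A X = coh_{Γ,A} ↑ X`; `opCtx`/`opTy`/`opTm` are the opposite
meta-operations. -/
structure NatConstr where
  vminus : ℕ → ℕ
  vplus : ℕ → ℕ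
  vtilde : ℕ → ℕ
  star : ℤ → Tm → Tm → Tm
  ctxUpPM : Ctx → Finset ℕ → Ctx
  ctxUp : Ctx → Finset ℕ → Ctx
  injm : Ctx → Finset ℕ → Sub
  injp : Ctx → Finset ℕ → Sub
  tyUpFresh : Ctx → Ty → ℕ → Finset ℕ → Ty
  tyUpTm : Ctx → Ty → Tm → Finset ℕ → Ty
  tmUp : Ctx → Tm → Finset ℕ → Tm
  subUp : Ctx → Sub → Finset ℕ → Sub
  cohUp : Ctx → Ty → Finset ℕ → Tm
  opCtx : Finset ℤ → Ctx → Ctx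
  opTy : Finset ℤ → Ty → Ty
  opTm : Finset ℤ → Tm → Tm
  /- Defining clauses: naturality of contexts. -/
  ctxUpPM_nil : ctxUpPM [] ∅ = []
  ctxUp_nil : ctxUp [] ∅ = []
  injm_nil : injm [] ∅ = []
  injp_nil : injp [] ∅ = []
  ctxUpPM_cons_not_mem : ∀ (Γ : Ctx) (x : ℕ) (A : Ty) (X : Finset ℕ), x ∉ X →
    ctxUpPM ((x, A) :: Γ) X = (x, A) :: ctxUp Γ X
  ctxUp_cons_not_mem : ∀ (Γ : Ctx) (x : ℕ) (A : Ty) (X : Finset ℕ), x ∉ X →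
    ctxUp ((x, A) :: Γ) X = (x, A) :: ctxUp Γ X
  injm_cons_not_mem : ∀ (Γ : Ctx) (x : ℕ) (A : Ty) (X : Finset ℕ), x ∉ X →
    injm ((x, A) :: Γ) X = (x, .var x) :: injm Γ X
  injp_cons_not_mem : ∀ (Γ : Ctx) (x : ℕ) (A : Ty) (X : Finset ℕ), x ∉ X →
    injp ((x, A) :: Γ) X = (x, .var x) :: injp Γ X
  ctxUpPM_cons_mem : ∀ (Γ : Ctx) (x : ℕ) (A : Ty) (X : Finset ℕ), x ∈ X →
    ctxUpPM ((x, A) :: Γ) X =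
      (vplus x, Ty.subst A (injp Γ (X.erase x))) ::
      (vminus x, Ty.subst A (injm Γ (X.erase x))) :: ctxUp Γ (X.erase x)
  ctxUp_cons_mem : ∀ (Γ : Ctx) (x : ℕ) (A : Ty) (X : Finset ℕ), x ∈ X →
    ctxUp ((x, A) :: Γ) X =
      (vtilde x, tyUpFresh Γ A x (X.erase x)) :: ctxUpPM ((x, A) :: Γ) X
  injm_cons_mem : ∀ (Γ : Ctx) (x : ℕ) (A : Ty) (X : Finset ℕ), x ∈ X →
    injm ((x, A) :: Γ) X = (x, .var (vminus x)) :: injm Γ (X.erase x)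
  injp_cons_mem : ∀ (Γ : Ctx) (x : ℕ) (A : Ty) (X : Finset ℕ), x ∈ X →
    injp ((x, A) :: Γ) X = (x, .var (vplus x)) :: injp Γ (X.erase x)
  /- Defining clauses: naturality of types at a fresh variable. -/
  tyUpFresh_obj : ∀ (Γ : Ctx) (x : ℕ) (X : Finset ℕ),
    tyUpFresh Γ .obj x X = .arr .obj (.var (vminus x)) (.var (vplus x))
  tyUpFresh_arr : ∀ (Γ : Ctx) (A : Ty) (u v : Tm) (x : ℕ) (X : Finset ℕ),
    tyUpFresh Γ (.arr A u v) x X =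
      .arr (.arr A (Tm.subst u (injm Γ X)) (Tm.subst v (injp Γ X)))
        (if Tm.vars v ∩ X = ∅ then .var (vminus x)
         else star (A.dim + 1) (.var (vminus x)) (tmUp Γ v X))
        (if Tm.vars u ∩ X = ∅ then .var (vplus x)
         else star (A.dim + 1) (tmUp Γ u X) (.var (vplus x)))
  /- Defining clauses: naturality of types at an arbitrary term. -/
  tyUpTm_obj : ∀ (Γ : Ctx) (t : Tm) (X : Finset ℕ),
    tyUpTm Γ .obj t X = .arr .obj (Tm.subst t (injm Γ X)) (Tm.subst t (injp Γ X))
  tyUpTm_arr : ∀ (Γ : Ctx) (A : Ty) (u v : Tm) (t : Tm) (X : Finset ℕ),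
    tyUpTm Γ (.arr A u v) t X =
      .arr (.arr A (Tm.subst u (injm Γ X)) (Tm.subst v (injp Γ X)))
        (if Tm.vars v ∩ X = ∅ then Tm.subst t (injm Γ X)
         else star (A.dim + 1) (Tm.subst t (injm Γ X)) (tmUp Γ v X))
        (if Tm.vars u ∩ X = ∅ then Tm.subst t (injp Γ X)
         else star (A.dim + 1) (tmUp Γ u X) (Tm.subst t (injp Γ X)))
  /- Defining clauses: naturality of terms. -/
  tmUp_var : ∀ (Γ : Ctx) (x : ℕ) (X : Finset ℕ),
    tmUp Γ (.var x) X = .var (vtilde x)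
  tmUp_coh : ∀ (Γ Δ : Ctx) (A : Ty) (γ : Sub) (X : Finset ℕ),
    tmUp Γ (.coh Δ A γ) X = Tm.subst (cohUp Δ A (preimage γ Δ X)) (subUp Γ γ X)
  /- Defining clauses: naturality of substitutions. -/
  subUp_nil : ∀ (Γ : Ctx) (X : Finset ℕ), subUp Γ [] X = []
  subUp_cons_empty : ∀ (Γ : Ctx) (γ : Sub) (x : ℕ) (t : Tm) (X : Finset ℕ),
    Tm.vars t ∩ X = ∅ →
    subUp Γ ((x, t) :: γ) X = (x, t) :: subUp Γ γ X
  subUp_cons_nonempty : ∀ (Γ : Ctx) (γ : Sub) (x : ℕ) (t : Tm) (X : Finset ℕ),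
    Tm.vars t ∩ X ≠ ∅ →
    subUp Γ ((x, t) :: γ) X =
      (vtilde x, tmUp Γ t X) :: (vplus x, Tm.subst t (injp Γ X)) ::
      (vminus x, Tm.subst t (injm Γ X)) :: subUp Γ γ X
  /- Defining clause: naturality of coherences at depth 0. -/
  cohUp_depth0 : ∀ (Γ : Ctx) (A : Ty) (X : Finset ℕ), depthCtx Γ X = 0 →
    cohUp Γ A X =
      .coh (ctxUp Γ X) (tyUpTm Γ A (.coh Γ A (idSub Γ)) X) (idSub (ctxUp Γ X))
  /- The binary composite `∗` has its expected typing. -/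
  star_wf : ∀ (Γ : Ctx) (B : Ty) (u v w a b : Tm),
    TmWf Γ a (.arr B u v) → TmWf Γ b (.arr B v w) →
    TmWf Γ (star (B.dim + 1) a b) (.arr B u w)
  /- Clauses and admissibility of the opposite meta-operations. -/
  opCtx_nil : ∀ M, opCtx M [] = []
  opCtx_cons : ∀ (M : Finset ℤ) (Γ : Ctx) (x : ℕ) (A : Ty),
    opCtx M ((x, A) :: Γ) = (x, opTy M A) :: opCtx M Γ
  opTy_obj : ∀ M, opTy M .obj = .obj
  opTm_var : ∀ (M : Finset ℤ) (x : ℕ), opTm M (.var x) = .var x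
  opCtx_wf : ∀ (M : Finset ℤ) (Γ : Ctx), CtxWf Γ → CtxWf (opCtx M Γ)
  opTm_wf : ∀ (M : Finset ℤ) (Γ : Ctx) (t : Tm) (A : Ty),
    TmWf Γ t A → TmWf (opCtx M Γ) (opTm M t) (opTy M A)

/-!
A variable `x` of `Δ` lies in `σ⁻¹X` when `x[σ]` meets `X`. Up-closure transfers along `σ`
because a well-typed term whose type meets an up-closed `X` meets `X` itself: for a variable
this is up-closure, and the variables of the type `A[γ]` of a coherence `coh_{Θ,A}[γ]` are
among those of `γ`.

For the depth bounds, the point is that `Γ ⊢ t : A` only involves variables of dimension at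
most `dim A + 1`. For a coherence `coh_{Θ,A}[γ]` the variables have dimension at most `dim Θ`,
and fullness of `A` forces `dim Θ ≤ dim A + 1` because the source boundary of a pasting context
has codimension one. Applied to `Γ ⊢ x[σ] : (Δ x)[σ]`, every `x ∈ σ⁻¹X` is witnessed by some
`z ∈ Var(x[σ]) ∩ X` with `dim z ≤ dim x`; as substitution preserves the dimension of types,
each term of the maximum defining a depth over `σ⁻¹X` is dominated by one over `X`.
-/

theorem Ty.neg_one_le_dim : ∀ A : Ty, -1 ≤ A.dim
  | .obj => le_rfl
  | .arr A _ _ => by have := A.neg_one_le_dim; simp only [Ty.dim]; omega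

@[simp]
theorem Ty.dim_subst : ∀ (A : Ty) (γ : Sub), (A.subst γ).dim = A.dim
  | .obj, _ => rfl
  | .arr A _ _, γ => by simp [Ty.subst, Ty.dim, A.dim_subst γ]

theorem le_fmax {s : Finset ℤ} {b : ℤ} (hb : b ∈ s) : b ≤ fmax s := by
  obtain ⟨m, hm⟩ := s.max_of_mem hb
  simpa [fmax, hm] using Finset.le_max_of_eq hb hm

theorem fmax_le_fmax {s t : Finset ℤ} (hst : ∀ a ∈ s, ∃ b ∈ t, a ≤ b)
    (hne : t.Nonempty → s.Nonempty) : fmax s ≤ fmax t := by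
  rcases s.eq_empty_or_nonempty with rfl | hs
  · rcases t.eq_empty_or_nonempty with rfl | ht
    · rfl
    · simpa using hne ht
  · obtain ⟨m, hm⟩ := s.max_of_nonempty hs
    obtain ⟨b, hb, hmb⟩ := hst m (Finset.mem_of_max hm)
    simpa [fmax, hm] using hmb.trans (le_fmax hb)

theorem fmax_image_mono {s : Finset ℕ} {f g : ℕ → ℤ} (h : ∀ x ∈ s, f x ≤ g x) :
    fmax (s.image f) ≤ fmax (s.image g) := by
  refine fmax_le_fmax ?_ fun hne => (Finset.image_nonempty.mp hne).image f
  simp only [Finset.mem_image, forall_exists_index, and_imp, forall_apply_eq_imp_iff₂]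
  exact fun x hx => ⟨g x, ⟨x, hx, rfl⟩, h x hx⟩

theorem mem_ctxVars_of_mem {Γ : Ctx} {x : ℕ} {A : Ty} (h : (x, A) ∈ Γ) : x ∈ ctxVars Γ := by
  induction Γ with
  | nil => simp at h
  | cons p Γ ih =>
    rcases List.mem_cons.mp h with rfl | h
    · simp [ctxVars]
    · simp [ctxVars, ih h]

theorem lookupTy_mem {Γ : Ctx} {x : ℕ} (h : x ∈ ctxVars Γ) : (x, lookupTy Γ x) ∈ Γ := by
  induction Γ with
  | nil => simp [ctxVars] at h
  | cons p Γ ih =>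
    obtain ⟨y, B⟩ := p
    by_cases hxy : x = y
    · simp [lookupTy, hxy]
    · simp only [ctxVars, Finset.mem_insert, hxy, false_or] at h
      rw [lookupTy, if_neg hxy]
      exact List.mem_cons_of_mem _ (ih h)

theorem varDim_cons {Γ : Ctx} {z x : ℕ} {A : Ty} (h : z ≠ x) :
    varDim ((x, A) :: Γ) z = varDim Γ z := by
  simp [varDim, lookupTy, h]

theorem ctxDim_le_iff {Γ : Ctx} {d : ℤ} (hd : -1 ≤ d) :
    ctxDim Γ ≤ d ↔ ∀ x C, (x, C) ∈ Γ → C.dim + 1 ≤ d := by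
  induction Γ with
  | nil => simpa [ctxDim] using hd
  | cons p Γ ih =>
    obtain ⟨y, B⟩ := p
    simp [ctxDim, ih, or_imp, forall_and]

theorem bdry_false_subset : ∀ (i : ℤ) (Γ : Ctx), bdry false i Γ ⊆ Γ
  | _, [] | _, [_] => List.Subset.refl _
  | i, (f, Af) :: (y, Ay) :: Γ => by
    have := bdry_false_subset i Γ
    simp only [bdry, Bool.false_eq_true, if_false]
    split_ifs <;> grind

theorem Ps.dim_lt_ctxDim {Γ : Ctx} {t : Tm} {B : Ty} (h : Ps Γ t B) : B.dim < ctxDim Γ := by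
  induction h with
  | base => simp [ctxDim, Ty.dim]
  | ext => simp only [ctxDim, Ty.dim] at *; omega
  | down _ ih => simp only [Ty.dim] at ih; omega

theorem Ps.min_le_ctxDim_bdry {Γ : Ctx} {t : Tm} {B : Ty} (h : Ps Γ t B) (i : ℤ) :
    min i (ctxDim Γ) ≤ ctxDim (bdry false i Γ) := by
  induction h with
  | base => simp [bdry, ctxDim, Ty.dim]
  | @ext Γ x A y f hps _ _ _ ih =>
    have hA := hps.dim_lt_ctxDim
    simp only [bdry, Bool.false_eq_true, if_false]
    split_ifs <;> simp only [ctxDim, Ty.dim] <;> omega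
  | down _ ih => exact ih

theorem lookupSub_idSub (Γ : Ctx) (x : ℕ) : lookupSub (idSub Γ) x = .var x := by
  induction Γ with
  | nil => rfl
  | cons p Γ ih => by_cases hxy : x = p.1 <;> simp_all [idSub, lookupSub]

mutual
theorem Tm.subst_idSub : ∀ (t : Tm) (Γ : Ctx), t.subst (idSub Γ) = t
  | .var x, Γ => by simp [Tm.subst, lookupSub_idSub]
  | .coh _ _ δ, Γ => by rw [Tm.subst, Sub.comp_idSub δ Γ]
theorem Sub.comp_idSub : ∀ (δ : Sub) (Γ : Ctx), Sub.comp δ (idSub Γ) = δ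
  | [], _ => rfl
  | (_, t) :: δ, Γ => by rw [Sub.comp, Tm.subst_idSub t Γ, Sub.comp_idSub δ Γ]
end

theorem Ty.subst_idSub : ∀ (A : Ty) (Γ : Ctx), A.subst (idSub Γ) = A
  | .obj, _ => rfl
  | .arr A u v, Γ => by rw [Ty.subst, A.subst_idSub, u.subst_idSub, v.subst_idSub]

mutual
theorem Tm.vars_subst : ∀ (t : Tm) (σ : Sub),
    (t.subst σ).vars = t.vars.biUnion fun x => (lookupSub σ x).vars
  | .var x, σ => by simp [Tm.subst, Tm.vars]
  | .coh _ _ δ, σ => by simp only [Tm.subst, Tm.vars]; exact Sub.vars_comp δ σ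
theorem Sub.vars_comp : ∀ (δ σ : Sub),
    Sub.vars (Sub.comp δ σ) = (Sub.vars δ).biUnion fun x => (lookupSub σ x).vars
  | [], _ => rfl
  | (_, t) :: δ, σ => by
    rw [Sub.comp, Sub.vars, Sub.vars, Tm.vars_subst t σ, Sub.vars_comp δ σ,
      Finset.union_biUnion]
end

theorem Ty.vars_subst : ∀ (A : Ty) (σ : Sub),
    (A.subst σ).vars = A.vars.biUnion fun x => (lookupSub σ x).vars
  | .obj, _ => rfl
  | .arr A u v, σ => by
    simp only [Ty.subst, Ty.vars, Finset.union_biUnion, A.vars_subst, u.vars_subst,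
      v.vars_subst]

def Sub.dom : Sub → Finset ℕ
  | [] => ∅
  | (x, _) :: γ => insert x (Sub.dom γ)

theorem vars_lookupSub_subset {γ : Sub} {x : ℕ} (hx : x ∈ Sub.dom γ) :
    (lookupSub γ x).vars ⊆ Sub.vars γ := by
  induction γ with
  | nil => simp [Sub.dom] at hx
  | cons p γ ih =>
    simp only [Sub.dom, Finset.mem_insert] at hx
    by_cases hxp : x = p.1
    · simp [lookupSub, hxp, Sub.vars]
    · simpa [lookupSub, hxp, Sub.vars] using (ih (hx.resolve_left hxp)).trans
        Finset.subset_union_right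

theorem Ty.vars_subst_subset {A : Ty} {γ : Sub} (h : A.vars ⊆ Sub.dom γ) :
    (A.subst γ).vars ⊆ Sub.vars γ := by
  rw [A.vars_subst]
  exact Finset.biUnion_subset.mpr fun x hx => vars_lookupSub_subset (h hx)

mutual
theorem Tm.subst_cons : ∀ {t : Tm} (x : ℕ) (s : Tm) (σ : Sub), x ∉ t.vars →
    t.subst ((x, s) :: σ) = t.subst σ
  | .var y, x, _, _, hx => by
    simp only [Tm.vars, Finset.mem_singleton] at hx
    simp [Tm.subst, lookupSub, Ne.symm hx]
  | .coh _ _ δ, x, s, σ, hx => by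
    simp only [Tm.vars] at hx
    rw [Tm.subst, Tm.subst, Sub.comp_cons x s σ hx]
theorem Sub.comp_cons : ∀ {δ : Sub} (x : ℕ) (s : Tm) (σ : Sub), x ∉ Sub.vars δ →
    Sub.comp δ ((x, s) :: σ) = Sub.comp δ σ
  | [], _, _, _, _ => rfl
  | (_, t) :: δ, x, s, σ, hx => by
    simp only [Sub.vars, Finset.mem_union, not_or] at hx
    rw [Sub.comp, Sub.comp, Tm.subst_cons x s σ hx.1, Sub.comp_cons x s σ hx.2]
end

theorem Ty.subst_cons : ∀ {A : Ty} (x : ℕ) (s : Tm) (σ : Sub), x ∉ A.vars →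
    A.subst ((x, s) :: σ) = A.subst σ
  | .obj, _, _, _, _ => rfl
  | .arr A u v, x, s, σ, hx => by
    simp only [Ty.vars, Finset.mem_union, not_or] at hx
    rw [Ty.subst, Ty.subst, Ty.subst_cons x s σ hx.1.1, Tm.subst_cons x s σ hx.1.2,
      Tm.subst_cons x s σ hx.2]

theorem lookupSub_comp {τ : Sub} (σ : Sub) {x : ℕ} (hx : x ∈ Sub.dom τ) :
    lookupSub (Sub.comp τ σ) x = (lookupSub τ x).subst σ := by
  induction τ with
  | nil => simp [Sub.dom] at hx
  | cons p τ ih =>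
    simp only [Sub.dom, Finset.mem_insert] at hx
    by_cases hxp : x = p.1
    · simp [Sub.comp, lookupSub, hxp]
    · simpa [Sub.comp, lookupSub, hxp] using ih (hx.resolve_left hxp)

mutual
theorem Tm.subst_subst : ∀ {t : Tm} (τ σ : Sub), t.vars ⊆ Sub.dom τ →
    (t.subst τ).subst σ = t.subst (Sub.comp τ σ)
  | .var x, τ, σ, h => by
    simp only [Tm.vars, Finset.singleton_subset_iff] at h
    simp only [Tm.subst]
    exact (lookupSub_comp σ h).symm
  | .coh _ _ δ, τ, σ, h => by
    simp only [Tm.vars] at h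
    simp only [Tm.subst]
    rw [Sub.comp_assoc τ σ h]
theorem Sub.comp_assoc : ∀ {δ : Sub} (τ σ : Sub), Sub.vars δ ⊆ Sub.dom τ →
    Sub.comp (Sub.comp δ τ) σ = Sub.comp δ (Sub.comp τ σ)
  | [], _, _, _ => rfl
  | (_, t) :: δ, τ, σ, h => by
    simp only [Sub.vars, Finset.union_subset_iff] at h
    simp only [Sub.comp]
    rw [Tm.subst_subst τ σ h.1, Sub.comp_assoc τ σ h.2]
end

theorem Ty.subst_subst : ∀ {A : Ty} (τ σ : Sub), A.vars ⊆ Sub.dom τ →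
    (A.subst τ).subst σ = A.subst (Sub.comp τ σ)
  | .obj, _, _, _ => rfl
  | .arr A u v, τ, σ, h => by
    simp only [Ty.vars, Finset.union_subset_iff] at h
    simp only [Ty.subst]
    rw [Ty.subst_subst τ σ h.1.1, Tm.subst_subst τ σ h.1.2, Tm.subst_subst τ σ h.2]

mutual
theorem TyWf.ctxWf : ∀ {Γ : Ctx} {A : Ty}, TyWf Γ A → CtxWf Γ
  | _, _, .obj h => h
  | _, _, .arr h _ => h.ctxWf
theorem TmWf.ctxWf : ∀ {Γ : Ctx} {t : Tm} {A : Ty}, TmWf Γ t A → CtxWf Γ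
  | _, _, _, .var h _ => h
  | _, _, _, .coh _ _ _ h => h.ctxWf.1
theorem SubWf.ctxWf : ∀ {Γ : Ctx} {γ : Sub} {Δ : Ctx}, SubWf Γ γ Δ → CtxWf Γ ∧ CtxWf Δ
  | _, _, _, .nil h => ⟨h, .nil⟩
  | _, _, _, .cons h hA hx _ => ⟨h.ctxWf.1, .cons h.ctxWf.2 hA hx⟩
end

theorem lookupTy_of_ctxWf : ∀ {Γ : Ctx} {x : ℕ} {A : Ty}, CtxWf Γ → (x, A) ∈ Γ →
    lookupTy Γ x = A
  | _, _, _, .nil, h => by simp at h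
  | _, x, _, @CtxWf.cons _ _ y hΓ _ hy, h => by
    rcases List.mem_cons.mp h with hhead | hmem
    · obtain ⟨rfl, rfl⟩ := Prod.mk.inj hhead
      simp [lookupTy]
    · have hxy : x ≠ y := by rintro rfl; exact hy (mem_ctxVars_of_mem hmem)
      simpa [lookupTy, hxy] using lookupTy_of_ctxWf hΓ hmem

theorem varDim_of_ctxWf {Γ : Ctx} {x : ℕ} {A : Ty} (hΓ : CtxWf Γ) (h : (x, A) ∈ Γ) :
    varDim Γ x = A.dim + 1 := by
  rw [varDim, lookupTy_of_ctxWf hΓ h]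

theorem SubWf.dom_eq : ∀ {Γ : Ctx} {γ : Sub} {Δ : Ctx}, SubWf Γ γ Δ → Sub.dom γ = ctxVars Δ
  | _, _, _, .nil _ => rfl
  | _, _, _, .cons h _ _ _ => by rw [Sub.dom, ctxVars, h.dom_eq]

mutual
theorem CtxWf.vars_subset : ∀ {Γ : Ctx}, CtxWf Γ → ∀ {y : ℕ} {B : Ty}, (y, B) ∈ Γ →
    B.vars ⊆ ctxVars Γ
  | _, .nil, _, _, h => by simp at h
  | _, .cons hΓ hA _, _, _, h => by
    -- recurse on `hA` before the `rfl` patterns below rewrite it, or structural recursion fails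
    have hA' := hA.vars_subset
    refine .trans ?_ (Finset.subset_insert _ _)
    rcases List.mem_cons.mp h with hhead | hmem
    · obtain ⟨rfl, rfl⟩ := Prod.mk.inj hhead
      exact hA'
    · exact hΓ.vars_subset hmem
theorem TyWf.vars_subset : ∀ {Γ : Ctx} {A : Ty}, TyWf Γ A → A.vars ⊆ ctxVars Γ
  | _, _, .obj _ => by simp [Ty.vars]
  | _, _, .arr hu hv => by
    have hu' := hu.vars_subset
    have hv' := hv.vars_subset
    simp only [Ty.vars, Finset.union_subset_iff] at *
    exact ⟨⟨hu'.2, hu'.1⟩, hv'.1⟩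
theorem TmWf.vars_subset : ∀ {Γ : Ctx} {t : Tm} {A : Ty}, TmWf Γ t A →
    t.vars ∪ A.vars ⊆ ctxVars Γ
  | _, _, _, .var hΓ hm => by
    simpa [Tm.vars, Finset.insert_subset_iff, mem_ctxVars_of_mem hm] using hΓ.vars_subset hm
  | _, _, _, .coh _ hA _ hγ => by
    have hAγ := Ty.vars_subst_subset (hγ.dom_eq ▸ hA.vars_subset)
    simpa only [Tm.vars, Finset.union_eq_left.mpr hAγ] using hγ.vars_subset
theorem SubWf.vars_subset : ∀ {Γ : Ctx} {γ : Sub} {Δ : Ctx}, SubWf Γ γ Δ →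
    Sub.vars γ ⊆ ctxVars Γ
  | _, _, _, .nil _ => by simp [Sub.vars]
  | _, _, _, .cons hγ _ _ ht => by
    simpa only [Sub.vars] using Finset.union_subset
      (Finset.subset_union_left.trans ht.vars_subset) hγ.vars_subset
end

theorem SubWf.vars_subst_subset {Γ Δ : Ctx} {γ : Sub} {A : Ty} (hγ : SubWf Γ γ Δ)
    (hA : TyWf Δ A) : (A.subst γ).vars ⊆ Sub.vars γ :=
  Ty.vars_subst_subset (hγ.dom_eq ▸ hA.vars_subset)

theorem SubWf.lookupSub_wf : ∀ {Γ : Ctx} {σ : Sub} {Δ : Ctx}, SubWf Γ σ Δ →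
    ∀ {y : ℕ} {B : Ty}, (y, B) ∈ Δ → TmWf Γ (lookupSub σ y) (B.subst σ)
  | _, _, _, .nil _, _, _, h => by simp at h
  | _, _, _, @SubWf.cons _ γ _ x _ t hγ hA hx ht, y, _, h => by
    rcases List.mem_cons.mp h with hhead | hmem
    · obtain ⟨rfl, rfl⟩ := Prod.mk.inj hhead
      simpa [lookupSub, Ty.subst_cons y t γ fun hy => hx (hA.vars_subset hy)] using ht
    · have hyx : y ≠ x := by rintro rfl; exact hx (mem_ctxVars_of_mem hmem)
      simpa [lookupSub, hyx,
        Ty.subst_cons x t γ fun hxB => hx (hγ.ctxWf.2.vars_subset hmem hxB)] using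
        hγ.lookupSub_wf hmem

theorem SubWf.lookupSub_wf_lookupTy {Γ : Ctx} {σ : Sub} {Δ : Ctx} (hσ : SubWf Γ σ Δ) {x : ℕ}
    (hx : x ∈ ctxVars Δ) : TmWf Γ (lookupSub σ x) ((lookupTy Δ x).subst σ) :=
  hσ.lookupSub_wf (lookupTy_mem hx)

theorem ctxDim_le_of_isFull {Δ : Ctx} {A : Ty} (hΔ : CtxWf Δ) (hps : PsCtx Δ)
    (hfull : isFull Δ A) (hA : ∀ z ∈ A.vars, varDim Δ z ≤ A.dim) : ctxDim Δ ≤ A.dim + 1 := by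
  obtain ⟨B, u, v, rfl, hsides⟩ := hfull
  have hB := B.neg_one_le_dim
  have hbound : ∀ Θ ⊆ Δ, ctxVars Θ ⊆ u.vars ∪ B.vars → ctxDim Θ ≤ B.dim + 1 := by
    refine fun Θ hΘ hvars => (ctxDim_le_iff (by omega)).mpr fun x C hx => ?_
    have hxA : x ∈ (Ty.arr B u v).vars := by
      have := hvars (mem_ctxVars_of_mem hx)
      simp only [Ty.vars, Finset.mem_union] at this ⊢
      tauto
    simpa [varDim_of_ctxWf hΔ (hΘ hx), Ty.dim] using hA x hxA
  rcases hsides with ⟨hsrc, -⟩ | ⟨hall, -⟩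
  · obtain ⟨x, hx⟩ := hps
    have hbdry := hx.min_le_ctxDim_bdry (ctxDim Δ - 1)
    have hsrc' := hbound (srcCtx Δ) (bdry_false_subset _ _) hsrc.le
    simp only [srcCtx, Ty.dim] at *
    omega
  · have := hbound Δ (List.Subset.refl _) hall.le
    simp only [Ty.dim]
    omega

mutual
theorem CtxWf.varDim_le : ∀ {Γ : Ctx}, CtxWf Γ → ∀ {y : ℕ} {B : Ty}, (y, B) ∈ Γ →
    ∀ z ∈ B.vars, varDim Γ z ≤ B.dim
  | _, .nil, _, _, h => by simp at h
  | _, .cons hΓ hA hx, _, _, h => by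
    have hA' := hA.varDim_le
    intro z hz
    rcases List.mem_cons.mp h with hhead | hmem
    · obtain ⟨rfl, rfl⟩ := Prod.mk.inj hhead
      rw [varDim_cons (by rintro rfl; exact hx (hA.vars_subset hz))]
      exact hA' z hz
    · rw [varDim_cons (by rintro rfl; exact hx (hΓ.vars_subset hmem hz))]
      exact hΓ.varDim_le hmem z hz
theorem TyWf.varDim_le : ∀ {Γ : Ctx} {A : Ty}, TyWf Γ A → ∀ z ∈ A.vars, varDim Γ z ≤ A.dim
  | _, _, .obj _ => by simp [Ty.vars]
  | _, _, .arr hu hv => by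
    have hu' := hu.varDim_le
    have hv' := hv.varDim_le
    intro z hz
    simp only [Ty.vars, Finset.mem_union] at hz hu' hv'
    simp only [Ty.dim]
    rcases hz with (hz | hz) | hz
    exacts [hu' z (.inr hz), hu' z (.inl hz), hv' z (.inl hz)]
theorem TmWf.varDim_le : ∀ {Γ : Ctx} {t : Tm} {A : Ty}, TmWf Γ t A →
    ∀ z ∈ t.vars ∪ A.vars, varDim Γ z ≤ A.dim + 1
  | _, _, _, .var hΓ hm => by
    have hA := hΓ.varDim_le hm
    intro z hz
    rcases Finset.mem_union.mp hz with hz | hz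
    · rw [Tm.vars, Finset.mem_singleton] at hz
      rw [hz, varDim_of_ctxWf hΓ hm]
    · linarith [hA z hz]
  | _, _, _, @TmWf.coh _ _ _ γ hps hA hfull hγ => by
    have hγ' := hγ.varDim_le
    have hΔ := ctxDim_le_of_isFull hA.ctxWf hps hfull hA.varDim_le
    intro z hz
    have hzγ : z ∈ Sub.vars γ := by
      simpa only [Tm.vars, Finset.union_eq_left.mpr (hγ.vars_subst_subset hA)] using hz
    rw [Ty.dim_subst]
    exact (hγ' z hzγ).trans hΔ
theorem SubWf.varDim_le : ∀ {Γ : Ctx} {γ : Sub} {Δ : Ctx}, SubWf Γ γ Δ →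
    ∀ z ∈ Sub.vars γ, varDim Γ z ≤ ctxDim Δ
  | _, _, _, .nil _ => by simp [Sub.vars]
  | _, _, _, .cons hγ _ _ ht => by
    have hγ' := hγ.varDim_le
    have ht' := ht.varDim_le
    intro z hz
    simp only [Sub.vars, Finset.mem_union, ctxDim] at hz ⊢
    rcases hz with hz | hz
    · have := ht' z (Finset.mem_union_left _ hz)
      rw [Ty.dim_subst] at this
      omega
    · have := hγ' z hz
      omega
end

theorem TmWf.vars_inter_nonempty_of_type {Γ : Ctx} {X : Finset ℕ} {s : Tm} {C : Ty}
    (hX : upClosed Γ X) (h : TmWf Γ s C) (hne : (C.vars ∩ X).Nonempty) :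
    (s.vars ∩ X).Nonempty := by
  cases h with
  | var _ hm =>
    obtain ⟨w, hw⟩ := hne
    rw [Finset.mem_inter] at hw
    exact ⟨_, Finset.mem_inter.mpr ⟨by simp [Tm.vars], hX.2 _ _ hm w hw.2 hw.1⟩⟩
  | coh _ hA _ hγ => exact hne.mono (Finset.inter_subset_inter_right (hγ.vars_subst_subset hA))

@[simp]
theorem mem_preimage {σ : Sub} {Δ : Ctx} {X : Finset ℕ} {x : ℕ} :
    x ∈ preimage σ Δ X ↔ x ∈ ctxVars Δ ∧ ((lookupSub σ x).vars ∩ X).Nonempty := by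
  rw [preimage, Finset.mem_filter]
  rfl

theorem upClosed_preimage {Γ Δ : Ctx} {σ : Sub} {X : Finset ℕ} (hσ : SubWf Γ σ Δ)
    (hX : upClosed Γ X) : upClosed Δ (preimage σ Δ X) := by
  refine ⟨fun x hx => (mem_preimage.mp hx).1, fun y B hm x hx hxB => ?_⟩
  obtain ⟨-, z, hz⟩ := mem_preimage.mp hx
  rw [Finset.mem_inter] at hz
  have hzB : z ∈ (B.subst σ).vars := by
    rw [Ty.vars_subst]
    exact Finset.mem_biUnion.mpr ⟨x, hxB, hz.1⟩
  exact mem_preimage.mpr ⟨mem_ctxVars_of_mem hm,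
    (hσ.lookupSub_wf hm).vars_inter_nonempty_of_type hX ⟨z, Finset.mem_inter.mpr ⟨hzB, hz.2⟩⟩⟩

theorem SubWf.varDim_le_of_mem_lookupSub {Γ Δ : Ctx} {σ : Sub} (hσ : SubWf Γ σ Δ) {x z : ℕ}
    (hx : x ∈ ctxVars Δ) (hz : z ∈ (lookupSub σ x).vars) : varDim Γ z ≤ varDim Δ x := by
  simpa [varDim] using (hσ.lookupSub_wf_lookupTy hx).varDim_le z (Finset.mem_union_left _ hz)

theorem depthTm_preimage_le {Γ Δ : Ctx} {σ : Sub} {X : Finset ℕ} {t : Tm} {A : Ty}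
    (hσ : SubWf Γ σ Δ) (ht : TmWf Δ t A) :
    depthTm Δ (preimage σ Δ X) t A ≤ depthTm Γ X (t.subst σ) (A.subst σ) := by
  have hvars : (t.subst σ).vars ∪ (A.subst σ).vars =
      (t.vars ∪ A.vars).biUnion fun x => (lookupSub σ x).vars := by
    rw [Tm.vars_subst, Ty.vars_subst, Finset.union_biUnion]
  unfold depthTm
  rw [hvars, Ty.dim_subst]
  apply fmax_le_fmax
  · intro a ha
    obtain ⟨x, hx, rfl⟩ := Finset.mem_image.mp ha
    obtain ⟨hxtA, hxY⟩ := Finset.mem_inter.mp hx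
    obtain ⟨hxΔ, z, hz⟩ := mem_preimage.mp hxY
    obtain ⟨hzx, hzX⟩ := Finset.mem_inter.mp hz
    refine ⟨_, Finset.mem_image_of_mem _
      (Finset.mem_inter.mpr ⟨Finset.mem_biUnion.mpr ⟨x, hxtA, hzx⟩, hzX⟩), ?_⟩
    have := hσ.varDim_le_of_mem_lookupSub hxΔ hzx
    omega
  · intro hne
    obtain ⟨z, hz⟩ := Finset.image_nonempty.mp hne
    obtain ⟨hzσ, hzX⟩ := Finset.mem_inter.mp hz
    obtain ⟨x, hx, hzx⟩ := Finset.mem_biUnion.mp hzσ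
    have hxY : x ∈ preimage σ Δ X :=
      mem_preimage.mpr ⟨ht.vars_subset hx, z, Finset.mem_inter.mpr ⟨hzx, hzX⟩⟩
    exact Finset.Nonempty.image ⟨x, Finset.mem_inter.mpr ⟨hx, hxY⟩⟩ _

theorem depthSub_preimage_le {Γ Δ Θ : Ctx} {σ τ : Sub} {X : Finset ℕ} (hσ : SubWf Γ σ Δ)
    (hτ : SubWf Δ τ Θ) :
    depthSub Δ (preimage σ Δ X) τ Θ ≤ depthSub Γ X (Sub.comp τ σ) Θ := by
  unfold depthSub
  refine fmax_image_mono fun x hx => ?_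
  have hxτ : Tm.subst (.var x) (Sub.comp τ σ) = (Tm.subst (.var x) τ).subst σ :=
    (Tm.subst_subst τ σ (by simpa [Tm.vars, hτ.dom_eq] using hx)).symm
  have hAτ : (lookupTy Θ x).subst (Sub.comp τ σ) = ((lookupTy Θ x).subst τ).subst σ :=
    (Ty.subst_subst τ σ (hτ.dom_eq ▸ hτ.ctxWf.2.vars_subset (lookupTy_mem hx))).symm
  rw [hxτ, hAτ]
  exact depthTm_preimage_le hσ (hτ.lookupSub_wf_lookupTy hx)

theorem depthCtx_preimage_le {Γ Δ : Ctx} {σ : Sub} {X : Finset ℕ} (hσ : SubWf Γ σ Δ) :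
    depthCtx Δ (preimage σ Δ X) ≤ depthSub Γ X σ Δ := by
  unfold depthCtx depthSub
  refine fmax_image_mono fun x hx => ?_
  simp only [Tm.subst, lookupSub_idSub, Ty.subst_idSub]
  exact depthTm_preimage_le hσ (.var hσ.ctxWf.2 (lookupTy_mem hx))

/-- **Lemma (preimage bounds).** For a valid substitution `Γ ⊢ σ : Δ` and an
up-closed `X ∈ U(Γ)`: the preimage `σ⁻¹X` is up-closed in `Δ`, and depths with
respect to `σ⁻¹X` are bounded by depths of substituted objects w.r.t. `X`. -/
theorem preimage_upClosed_and_depth_bounds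
    (Γ : Ctx) (σ : Sub) (Δ : Ctx) (X : Finset ℕ)
    (hσ : SubWf Γ σ Δ) (hX : upClosed Γ X) :
    upClosed Δ (preimage σ Δ X) ∧
    (∀ (t : Tm) (A : Ty), TmWf Δ t A →
      depthTm Δ (preimage σ Δ X) t A ≤
        depthTm Γ X (Tm.subst t σ) (Ty.subst A σ)) ∧
    (∀ (τ : Sub) (Θ : Ctx), SubWf Δ τ Θ →
      depthSub Δ (preimage σ Δ X) τ Θ ≤ depthSub Γ X (Sub.comp τ σ) Θ) ∧
    depthCtx Δ (preimage σ Δ X) ≤ depthSub Γ X σ Δ :=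
  ⟨upClosed_preimage hσ hX, fun _ _ ht => depthTm_preimage_le hσ ht,
    fun _ _ hτ => depthSub_preimage_le hσ hτ, depthCtx_preimage_le hσ⟩

end Catt
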